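/- Let X be a continuous centered Gaussian field on [0,∞)×[0,1] as in the context, with increment variance bound Var(X(t,x) − X(s,y)) ≤ L(√|t−s| + |x−y|) and X(t,0) = X(t,1) = 0 a.s. Then for every p ∈ [1,∞) and every γ ∈ (0, 1/4) there is a constant C > 0 such that for all s, t ≥ 0: E[(sup_{x ∈ [0,1]} |X(t,x) − X(s,x)|)^p] ≤ C·|t−s|^{γp}. -/

import Mathlib

/-!
Fix `s, t` and put `Y = X(t, ·) - X(s, ·)`. Dyadic chaining bounds `sup |Y|` by the maximum of
`|Y|` on the grid of mesh `2^-N` plus, for every finer level `n > N`, the maximal increments of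
`X(t, ·)` and `X(s, ·)` between neighbouring points of the grid of mesh `2^-n`. In `L^q` a
maximum of `m` Gaussian variables costs only a factor `m^(1/q)`, so level `n` contributes
`(2^-n)^(1/2 - 1/q)` and the grid term `(2^N)^(1/q) |t - s|^(1/4)`. Taking `2^-N ≈ √|t - s|`
gives `|t - s|^(1/4 - 1/(2q))` when `|t - s| ≤ 1`; when `|t - s| > 1` take `N = 0`, where the
Dirichlet condition kills the grid term. For `q` large and `q ≥ p`, Lyapunov's inequality turns
the `L^q` bound into the claimed `p`-th moment bound.
-/

open Real MeasureTheory ProbabilityTheory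
open Filter Topology Set
open scoped ENNReal NNReal

section LpBounds

variable {α : Type*} [MeasurableSpace α] {μ : Measure α}

lemma ENNReal.iSup_rpow {ι : Type*} (g : ι → ℝ≥0∞) {q : ℝ} (hq : 0 < q) :
    (⨆ i, g i) ^ q = ⨆ i, g i ^ q :=
  (ENNReal.orderIsoRpow q hq).map_iSup g

lemma eLpNorm_iSup_of_monotone {g : ℕ → α → ℝ≥0∞} (hg : ∀ n, AEMeasurable (g n) μ)
    (hmono : ∀ a, Monotone (g · a)) {q : ℝ≥0} (hq : q ≠ 0) :
    eLpNorm (fun a => ⨆ n, g n a) q μ = ⨆ n, eLpNorm (g n) q μ := by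
  have hq0 : 0 < (q : ℝ) := by positivity
  simp only [eLpNorm_nnreal_eq_lintegral hq, enorm_eq_self, ENNReal.iSup_rpow _ hq0]
  rw [lintegral_iSup' (fun n => (hg n).pow_const _) (ae_of_all _ fun a _ _ h =>
    ENNReal.rpow_le_rpow (hmono a h) hq0.le), ENNReal.iSup_rpow _ (by positivity)]

lemma eLpNorm_tsum_le {f : ℕ → α → ℝ≥0∞} (hf : ∀ n, AEMeasurable (f n) μ) {q : ℝ≥0}
    (hq : 1 ≤ q) :
    eLpNorm (fun a => ∑' n, f n a) q μ ≤ ∑' n, eLpNorm (f n) q μ := by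
  have hS : ∀ m, AEMeasurable (∑ n ∈ Finset.range m, f n) μ := fun m =>
    Finset.aemeasurable_sum _ fun n _ => hf n
  have hmono : ∀ a, Monotone fun m => (∑ n ∈ Finset.range m, f n) a := fun a _ _ h => by
    simpa using Finset.sum_le_sum_of_subset (Finset.range_subset_range.2 h)
  have hsum : (fun a => ∑' n, f n a) = fun a => ⨆ m, (∑ n ∈ Finset.range m, f n) a := by
    simp only [Finset.sum_apply, ENNReal.tsum_eq_iSup_nat]
  rw [hsum, eLpNorm_iSup_of_monotone hS hmono (by positivity)]
  exact iSup_le fun m => (eLpNorm_sum_le (fun n _ => (hf n).aestronglyMeasurable)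
    (by exact_mod_cast hq)).trans (ENNReal.sum_le_tsum _)

lemma Finset.aemeasurable_sup {β ι : Type*} [SemilatticeSup β] [OrderBot β] [MeasurableSpace β]
    [MeasurableSup₂ β] (s : Finset ι) {f : ι → α → β} (hf : ∀ i ∈ s, AEMeasurable (f i) μ) :
    AEMeasurable (fun a => s.sup (f · a)) μ := by
  simp_rw [← Finset.sup_apply]
  exact Finset.sup_induction (p := (AEMeasurable · μ)) aemeasurable_const
    (fun _ hf _ hg => hf.sup hg) hf

lemma ENNReal.finset_sup_rpow_le_sum {ι : Type*} (s : Finset ι) (g : ι → ℝ≥0∞) {q : ℝ}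
    (hq : 0 < q) :
    s.sup g ^ q ≤ ∑ i ∈ s, g i ^ q :=
  Finset.sup_induction (p := (· ^ q ≤ ∑ i ∈ s, g i ^ q))
    (by simp [ENNReal.zero_rpow_of_pos hq])
    (fun _ ha _ hb => (ENNReal.monotone_rpow_of_nonneg hq.le).map_sup _ _ ▸ sup_le ha hb)
    fun i hi => Finset.single_le_sum (f := (g · ^ q)) (fun _ _ => zero_le) hi

lemma eLpNorm_finset_sup_le {ι : Type*} (s : Finset ι) {f : ι → α → ℝ≥0∞}
    (hf : ∀ i ∈ s, AEMeasurable (f i) μ) {q : ℝ≥0} (hq : q ≠ 0) {b : ℝ≥0∞}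
    (hb : ∀ i ∈ s, eLpNorm (f i) q μ ≤ b) :
    eLpNorm (fun a => s.sup (f · a)) q μ ≤ (s.card : ℝ≥0∞) ^ (1 / (q : ℝ)) * b := by
  have hq0 : 0 < (q : ℝ) := by positivity
  have hb' : ∀ i ∈ s, ∫⁻ a, f i a ^ (q : ℝ) ∂μ ≤ b ^ (q : ℝ) := fun i hi => by
    have := hb i hi
    rw [eLpNorm_nnreal_eq_lintegral hq] at this
    simpa [ENNReal.rpow_inv_le_iff hq0] using this
  rw [eLpNorm_nnreal_eq_lintegral hq]
  simp only [enorm_eq_self]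
  calc (∫⁻ a, s.sup (f · a) ^ (q : ℝ) ∂μ) ^ (1 / (q : ℝ))
      ≤ (∑ i ∈ s, ∫⁻ a, f i a ^ (q : ℝ) ∂μ) ^ (1 / (q : ℝ)) := by
        rw [← lintegral_finsetSum' _ fun i hi => (hf i hi).pow_const _]
        gcongr with a
        exact ENNReal.finset_sup_rpow_le_sum s _ hq0
    _ ≤ ((s.card : ℝ≥0∞) * b ^ (q : ℝ)) ^ (1 / (q : ℝ)) := by
        gcongr
        simpa using Finset.sum_le_sum hb'
    _ = (s.card : ℝ≥0∞) ^ (1 / (q : ℝ)) * b := by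
        rw [ENNReal.mul_rpow_of_nonneg _ _ (by positivity), ← ENNReal.rpow_mul,
          mul_one_div_cancel hq0.ne', ENNReal.rpow_one]

lemma lintegral_rpow_le_eLpNorm_rpow [IsProbabilityMeasure μ] {f : α → ℝ≥0∞}
    (hf : AEMeasurable f μ) {p : ℝ} (hp : 0 < p) {q : ℝ≥0} (hpq : p ≤ q) :
    ∫⁻ a, f a ^ p ∂μ ≤ eLpNorm f q μ ^ p := by
  have hp' : p.toNNReal ≠ 0 := by simpa using hp
  calc ∫⁻ a, f a ^ p ∂μ = eLpNorm f p.toNNReal μ ^ p := by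
        rw [eLpNorm_nnreal_eq_lintegral hp', Real.coe_toNNReal _ hp.le, ← ENNReal.rpow_mul,
          one_div_mul_cancel hp.ne', ENNReal.rpow_one]
        simp only [enorm_eq_self]
    _ ≤ eLpNorm f q μ ^ p := by
        gcongr
        exact eLpNorm_le_eLpNorm_of_exponent_le
          (by simpa using Real.toNNReal_le_iff_le_coe.2 hpq) hf.aestronglyMeasurable

end LpBounds

lemma eLpNorm_eq_of_map_eq_gaussianReal {Ω : Type*} [MeasurableSpace Ω] {P : Measure Ω}
    {Z : Ω → ℝ} {v : ℝ≥0} (hZ : P.map Z = gaussianReal 0 v) (q : ℝ≥0∞) :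
    eLpNorm Z q P = ENNReal.ofReal √v * eLpNorm id q (gaussianReal 0 1) := by
  have hZm : AEMeasurable Z P := .of_map_ne_zero (by simp [hZ, NeZero.ne])
  have hscale : gaussianReal 0 v = (gaussianReal 0 1).map (√v * ·) := by
    rw [gaussianReal_map_const_mul]
    congr
    · simp
    · ext; simp
  calc eLpNorm Z q P = eLpNorm id q (gaussianReal 0 v) := by
        rw [← hZ, eLpNorm_map_measure aestronglyMeasurable_id hZm]; rfl
    _ = eLpNorm (√v • id) q (gaussianReal 0 1) := by
        rw [hscale, eLpNorm_map_measure aestronglyMeasurable_id (by fun_prop)]; rfl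
    _ = ENNReal.ofReal √v * eLpNorm id q (gaussianReal 0 1) := by
        rw [eLpNorm_const_smul, Real.enorm_eq_ofReal (Real.sqrt_nonneg _)]

noncomputable def stdGaussianLpNorm (q : ℝ≥0) : ℝ≥0 :=
  (eLpNorm id q (gaussianReal 0 1)).toNNReal

lemma ofReal_stdGaussianLpNorm (q : ℝ≥0) :
    ENNReal.ofReal (stdGaussianLpNorm q) = eLpNorm id q (gaussianReal 0 1) := by
  rw [ENNReal.ofReal_coe_nnreal, stdGaussianLpNorm,
    ENNReal.coe_toNNReal (memLp_id_gaussianReal q).eLpNorm_ne_top]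

noncomputable def dyadicGridSup (F : ℝ → ℝ) (n : ℕ) : ℝ≥0∞ :=
  (Finset.range (2 ^ n + 1)).sup fun k => ‖F (k / 2 ^ n)‖ₑ

noncomputable def dyadicIncrementSup (F : ℝ → ℝ) (n : ℕ) : ℝ≥0∞ :=
  (Finset.range (2 ^ n)).sup fun k => ‖F ((k + 1) / 2 ^ n) - F (k / 2 ^ n)‖ₑ

lemma natCast_div_two_pow_mem_Icc {n k : ℕ} (hk : k ≤ 2 ^ n) :
    (k : ℝ) / 2 ^ n ∈ Icc (0 : ℝ) 1 :=
  ⟨by positivity, div_le_one_of_le₀ (by exact_mod_cast hk) (by positivity)⟩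

lemma natCast_add_one_div_two_pow_mem_Icc {n k : ℕ} (hk : k < 2 ^ n) :
    ((k : ℝ) + 1) / 2 ^ n ∈ Icc (0 : ℝ) 1 := by
  exact_mod_cast natCast_div_two_pow_mem_Icc (k := k + 1) hk

section Chaining

variable {F : ℝ → ℝ} {x : ℝ}

lemma enorm_le_dyadicGridSup {n k : ℕ} (hk : k ≤ 2 ^ n) :
    ‖F (k / 2 ^ n)‖ₑ ≤ dyadicGridSup F n :=
  Finset.le_sup (f := fun k : ℕ => ‖F (k / 2 ^ n)‖ₑ) (Finset.mem_range.2 (by omega))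

lemma enorm_sub_le_dyadicIncrementSup {n k : ℕ} (hk : k < 2 ^ n) :
    ‖F ((k + 1) / 2 ^ n) - F (k / 2 ^ n)‖ₑ ≤ dyadicIncrementSup F n :=
  Finset.le_sup (f := fun k : ℕ => ‖F ((k + 1) / 2 ^ n) - F (k / 2 ^ n)‖ₑ)
    (Finset.mem_range.2 hk)

lemma floor_mul_two_pow_le (hx : x ∈ Icc (0 : ℝ) 1) (n : ℕ) : ⌊x * 2 ^ n⌋₊ ≤ 2 ^ n :=
  Nat.floor_le_of_le (by push_cast; nlinarith [hx.2, pow_pos (two_pos (α := ℝ)) n])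

lemma floor_mul_two_pow_div_mem_Icc (hx : x ∈ Icc (0 : ℝ) 1) (n : ℕ) :
    (⌊x * 2 ^ n⌋₊ : ℝ) / 2 ^ n ∈ Icc (0 : ℝ) 1 :=
  natCast_div_two_pow_mem_Icc (floor_mul_two_pow_le hx n)

lemma enorm_sub_floor_le_dyadicIncrementSup (hx : x ∈ Icc (0 : ℝ) 1) (n : ℕ) :
    ‖F (⌊x * 2 ^ (n + 1)⌋₊ / 2 ^ (n + 1)) - F (⌊x * 2 ^ n⌋₊ / 2 ^ n)‖ₑ
      ≤ dyadicIncrementSup F (n + 1) := by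
  set k := ⌊x * 2 ^ (n + 1)⌋₊
  have hk_half : ⌊x * 2 ^ n⌋₊ = k / 2 := by
    rw [← Nat.floor_div_ofNat]; congr 1; ring
  have hk_le : k ≤ 2 ^ (n + 1) := floor_mul_two_pow_le hx (n + 1)
  rw [hk_half]
  -- by parity of `k`, the finer point is the coarser one or its right neighbour at level `n + 1`
  obtain ⟨j, hj | hj⟩ := Nat.even_or_odd' k
  · have hpt : ((k : ℕ) : ℝ) / 2 ^ (n + 1) = ((k / 2 : ℕ) : ℝ) / 2 ^ n := by
      rw [hj, Nat.mul_div_cancel_left _ two_pos]; push_cast; rw [pow_succ]; field_simp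
    simp [hpt]
  · have hj2 : k / 2 = j := by omega
    have hpt : ((k : ℕ) : ℝ) = ((2 * j : ℕ) : ℝ) + 1 := by rw [hj]; push_cast; ring
    have hpt' : ((j : ℕ) : ℝ) / 2 ^ n = ((2 * j : ℕ) : ℝ) / 2 ^ (n + 1) := by
      push_cast; rw [pow_succ]; field_simp
    rw [hj2, hpt, hpt']
    exact enorm_sub_le_dyadicIncrementSup (by omega)

lemma enorm_floor_le_dyadicGridSup_add_sum (hx : x ∈ Icc (0 : ℝ) 1) (N m : ℕ) :
    ‖F (⌊x * 2 ^ (N + m)⌋₊ / 2 ^ (N + m))‖ₑ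
      ≤ dyadicGridSup F N + ∑ j ∈ Finset.range m, dyadicIncrementSup F (N + 1 + j) := by
  induction m with
  | zero => simpa using enorm_le_dyadicGridSup (floor_mul_two_pow_le hx N)
  | succ m ih =>
    rw [Finset.sum_range_succ, add_right_comm N 1 m, ← add_assoc (dyadicGridSup F N)]
    set a := F (⌊x * 2 ^ (N + m)⌋₊ / 2 ^ (N + m))
    set b := F (⌊x * 2 ^ (N + m + 1)⌋₊ / 2 ^ (N + m + 1))
    calc ‖b‖ₑ = ‖a + (b - a)‖ₑ := by rw [add_sub_cancel]
      _ ≤ ‖a‖ₑ + ‖b - a‖ₑ := enorm_add_le _ _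
      _ ≤ _ := add_le_add ih (enorm_sub_floor_le_dyadicIncrementSup hx _)

lemma tendsto_floor_mul_two_pow_div (hx : x ∈ Icc (0 : ℝ) 1) :
    Tendsto (fun i : ℕ => (⌊x * 2 ^ i⌋₊ : ℝ) / 2 ^ i) atTop (𝓝[Icc 0 1] x) :=
  tendsto_nhdsWithin_iff.2 ⟨(tendsto_nat_floor_mul_div_atTop hx.1).comp
    (tendsto_pow_atTop_atTop_of_one_lt one_lt_two),
    Eventually.of_forall fun i => floor_mul_two_pow_div_mem_Icc hx i⟩

lemma enorm_le_dyadicGridSup_add_tsum (hF : ContinuousOn F (Icc 0 1))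
    (hx : x ∈ Icc (0 : ℝ) 1) (N : ℕ) :
    ‖F x‖ₑ ≤ dyadicGridSup F N + ∑' j, dyadicIncrementSup F (N + 1 + j) := by
  refine le_of_tendsto ((hF x hx).tendsto.comp (tendsto_floor_mul_two_pow_div hx)).enorm ?_
  filter_upwards [eventually_ge_atTop N] with i hi
  obtain ⟨m, rfl⟩ := Nat.exists_eq_add_of_le hi
  exact (enorm_floor_le_dyadicGridSup_add_sum hx N m).trans
    (by gcongr; exact ENNReal.sum_le_tsum _)

lemma iSup_enorm_eq_iSup_dyadicGridSup (hF : ContinuousOn F (Icc 0 1)) :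
    ⨆ x : Icc (0 : ℝ) 1, ‖F x‖ₑ = ⨆ n, dyadicGridSup F n := by
  refine le_antisymm (iSup_le fun x => le_of_tendsto
    ((hF x x.2).tendsto.comp (tendsto_floor_mul_two_pow_div x.2)).enorm
    (Eventually.of_forall fun i => (enorm_le_dyadicGridSup
      (floor_mul_two_pow_le x.2 i)).trans (le_iSup (dyadicGridSup F) i)))
    (iSup_le fun n => Finset.sup_le fun k hk => ?_)
  exact le_iSup_of_le (⟨_, natCast_div_two_pow_mem_Icc (Nat.lt_succ_iff.1
    (Finset.mem_range.1 hk))⟩ : Icc (0 : ℝ) 1) le_rfl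

end Chaining

lemma dyadicIncrementSup_sub_le (F G : ℝ → ℝ) (n : ℕ) :
    dyadicIncrementSup (fun x => F x - G x) n
      ≤ dyadicIncrementSup F n + dyadicIncrementSup G n :=
  Finset.sup_le fun k hk => by
    have hk' := Finset.mem_range.1 hk
    calc ‖F ((k + 1) / 2 ^ n) - G ((k + 1) / 2 ^ n) - (F (k / 2 ^ n) - G (k / 2 ^ n))‖ₑ
        = ‖(F ((k + 1) / 2 ^ n) - F (k / 2 ^ n))
            - (G ((k + 1) / 2 ^ n) - G (k / 2 ^ n))‖ₑ := by
          congr 1; ring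
      _ ≤ _ := enorm_sub_le
      _ ≤ _ := add_le_add (enorm_sub_le_dyadicIncrementSup hk')
          (enorm_sub_le_dyadicIncrementSup hk')

lemma dyadicGridSup_zero_of_eq_zero {F : ℝ → ℝ} (h0 : F 0 = 0) (h1 : F 1 = 0) :
    dyadicGridSup F 0 = 0 := by
  simp [dyadicGridSup, Finset.range_add_one, h0, h1]

lemma exists_one_le_two_pow_mul_le_two {u : ℝ} (hu0 : 0 < u) (hu1 : u ≤ 1) :
    ∃ N : ℕ, 1 ≤ 2 ^ N * u ∧ 2 ^ N * u ≤ 2 := by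
  obtain ⟨n, hn, hn'⟩ := exists_nat_pow_near (one_le_inv_iff₀.2 ⟨hu0, hu1⟩) one_lt_two
  have hlow := mul_lt_mul_of_pos_right hn' hu0
  have hup := mul_le_mul_of_nonneg_right hn hu0.le
  rw [inv_mul_cancel₀ hu0.ne'] at hlow hup
  exact ⟨n + 1, hlow.le, by rw [pow_succ]; linarith⟩

lemma two_rpow_lt_one {q : ℝ} (hq : 2 < q) : (2 : ℝ) ^ (1 / q - 1 / 2) < 1 :=
  Real.rpow_lt_one_of_one_lt_of_neg one_lt_two
    (by linarith [one_div_lt_one_div_of_lt two_pos hq])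

lemma two_pow_rpow_mul_sqrt_div (L q : ℝ) (n : ℕ) :
    (2 ^ n : ℝ) ^ (1 / q) * √(L / 2 ^ n) = √L * ((2 : ℝ) ^ (1 / q - 1 / 2)) ^ n := by
  rw [Real.sqrt_div' _ (by positivity), Real.sqrt_eq_rpow (2 ^ n),
    ← Real.rpow_pow_comm (by norm_num), ← Real.rpow_pow_comm (by norm_num), Real.rpow_sub two_pos,
    div_pow]
  ring

lemma two_pow_add_one_rpow_mul_sqrt_le {L q u : ℝ} (hq : 0 < q) (hu : 0 < u) {N : ℕ}
    (hN : 2 ^ N * u ≤ 2) :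
    ((2 : ℝ) ^ N + 1) ^ (1 / q) * √(L * u) ≤ 4 ^ (1 / q) * √L * u ^ (1 / 2 - 1 / q) := by
  have hcard : (2 : ℝ) ^ N + 1 ≤ 4 * u⁻¹ := by
    rw [le_mul_inv_iff₀ hu]; nlinarith [one_le_pow₀ (M₀ := ℝ) (n := N) one_le_two]
  calc ((2 : ℝ) ^ N + 1) ^ (1 / q) * √(L * u)
      ≤ (4 * u⁻¹) ^ (1 / q) * (√L * u ^ (1 / 2 : ℝ)) := by
        rw [Real.sqrt_mul' _ hu.le, Real.sqrt_eq_rpow u]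
        gcongr
    _ = 4 ^ (1 / q) * √L * u ^ (1 / 2 - 1 / q) := by
        rw [Real.mul_rpow (by norm_num) (by positivity), Real.inv_rpow hu.le, Real.rpow_sub hu,
          div_eq_mul_inv (u ^ _)]
        ring

lemma two_rpow_pow_le {q u : ℝ} (hq : 2 ≤ q) {N : ℕ} (hN : 1 ≤ 2 ^ N * u) :
    ((2 : ℝ) ^ (1 / q - 1 / 2)) ^ N ≤ u ^ (1 / 2 - 1 / q) := by
  have hθ : 0 ≤ 1 / 2 - 1 / q := by
    rw [sub_nonneg]; exact one_div_le_one_div_of_le two_pos hq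
  rw [Real.rpow_pow_comm (by norm_num), ← neg_sub, Real.rpow_neg (by positivity),
    ← Real.inv_rpow (by positivity)]
  gcongr
  rw [inv_le_iff_one_le_mul₀ (by positivity)]
  linarith

lemma sqrt_rpow_le_rpow {h θ γ : ℝ} (h0 : 0 < h) (h1 : h ≤ 1) (hγ : 2 * γ ≤ θ) :
    √h ^ θ ≤ h ^ γ := by
  rw [Real.sqrt_eq_rpow, ← Real.rpow_mul h0.le]
  exact Real.rpow_le_rpow_of_exponent_ge h0 h1 (by linarith)

lemma ContinuousOn.sub_slices {f : ℝ × ℝ → ℝ} (hf : ContinuousOn f (Ici 0 ×ˢ Icc 0 1))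
    {s t : ℝ} (hs : 0 ≤ s) (ht : 0 ≤ t) :
    ContinuousOn (fun x => f (t, x) - f (s, x)) (Icc 0 1) :=
  (hf.comp (by fun_prop) fun _ hx => mk_mem_prod ht hx).sub
    (hf.comp (by fun_prop) fun _ hx => mk_mem_prod hs hx)

def HasGaussianIncrements {Ω : Type*} [MeasurableSpace Ω] (P : Measure Ω)
    (X : ℝ → ℝ → Ω → ℝ) (L : ℝ) : Prop :=
  ∀ s t : ℝ, 0 ≤ s → 0 ≤ t → ∀ x ∈ Icc (0 : ℝ) 1, ∀ y ∈ Icc (0 : ℝ) 1,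
    ∃ v : ℝ≥0, (v : ℝ) ≤ L * (√|t - s| + |x - y|) ∧
      P.map (fun ω => X t x ω - X s y ω) = gaussianReal 0 v

namespace HasGaussianIncrements

variable {Ω : Type*} [MeasurableSpace Ω] {P : Measure Ω} {X : ℝ → ℝ → Ω → ℝ} {L : ℝ}
  {s t x y : ℝ}

lemma aemeasurable_sub (hX : HasGaussianIncrements P X L) (hs : 0 ≤ s) (ht : 0 ≤ t)
    (hx : x ∈ Icc (0 : ℝ) 1) (hy : y ∈ Icc (0 : ℝ) 1) :
    AEMeasurable (fun ω => X t x ω - X s y ω) P := by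
  obtain ⟨v, -, hmap⟩ := hX s t hs ht x hx y hy
  exact .of_map_ne_zero (by simp [hmap, NeZero.ne])

lemma eLpNorm_sub_le (hX : HasGaussianIncrements P X L) (hs : 0 ≤ s) (ht : 0 ≤ t)
    (hx : x ∈ Icc (0 : ℝ) 1) (hy : y ∈ Icc (0 : ℝ) 1) (q : ℝ≥0) :
    eLpNorm (fun ω => X t x ω - X s y ω) q P
      ≤ ENNReal.ofReal (√(L * (√|t - s| + |x - y|)) * stdGaussianLpNorm q) := by
  obtain ⟨v, hv, hmap⟩ := hX s t hs ht x hx y hy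
  rw [eLpNorm_eq_of_map_eq_gaussianReal hmap, ← ofReal_stdGaussianLpNorm,
    ← ENNReal.ofReal_mul (by positivity)]
  gcongr

lemma aemeasurable_dyadicIncrement (hX : HasGaussianIncrements P X L) (ht : 0 ≤ t) {n k : ℕ}
    (hk : k < 2 ^ n) :
    AEMeasurable (fun ω => ‖X t ((k + 1) / 2 ^ n) ω - X t (k / 2 ^ n) ω‖ₑ) P :=
  (hX.aemeasurable_sub ht ht (natCast_add_one_div_two_pow_mem_Icc hk)
    (natCast_div_two_pow_mem_Icc hk.le)).enorm

lemma aemeasurable_dyadicIncrementSup (hX : HasGaussianIncrements P X L) (ht : 0 ≤ t)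
    (n : ℕ) : AEMeasurable (fun ω => dyadicIncrementSup (X t · ω) n) P :=
  Finset.aemeasurable_sup _ fun _ hk => hX.aemeasurable_dyadicIncrement ht (Finset.mem_range.1 hk)

lemma aemeasurable_dyadicGridSup_sub (hX : HasGaussianIncrements P X L) (hs : 0 ≤ s)
    (ht : 0 ≤ t) (N : ℕ) :
    AEMeasurable (fun ω => dyadicGridSup (fun x => X t x ω - X s x ω) N) P :=
  Finset.aemeasurable_sup _ fun _ hk =>
    (hX.aemeasurable_sub hs ht (natCast_div_two_pow_mem_Icc (Nat.lt_succ_iff.1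
      (Finset.mem_range.1 hk))) (natCast_div_two_pow_mem_Icc (Nat.lt_succ_iff.1
      (Finset.mem_range.1 hk)))).enorm

lemma aemeasurable_iSup_sub (hX : HasGaussianIncrements P X L)
    (hcont : ∀ᵐ ω ∂P, ContinuousOn (fun q : ℝ × ℝ => X q.1 q.2 ω) (Ici 0 ×ˢ Icc 0 1))
    (hs : 0 ≤ s) (ht : 0 ≤ t) :
    AEMeasurable (fun ω => ⨆ x : Icc (0 : ℝ) 1, ‖X t x ω - X s x ω‖ₑ) P := by
  refine (AEMeasurable.iSup fun n => hX.aemeasurable_dyadicGridSup_sub hs ht n).congr ?_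
  filter_upwards [hcont] with ω hω
  exact (iSup_enorm_eq_iSup_dyadicGridSup (hω.sub_slices hs ht)).symm

lemma eLpNorm_dyadicIncrementSup_le (hX : HasGaussianIncrements P X L) (ht : 0 ≤ t) (n : ℕ)
    {q : ℝ≥0} (hq : q ≠ 0) :
    eLpNorm (fun ω => dyadicIncrementSup (X t · ω) n) q P
      ≤ ENNReal.ofReal (√L * stdGaussianLpNorm q * ((2 : ℝ) ^ (1 / (q : ℝ) - 1 / 2)) ^ n) := by
  refine (eLpNorm_finset_sup_le _ (fun k hk => ?_) hq
    (b := ENNReal.ofReal (√(L / 2 ^ n) * stdGaussianLpNorm q)) fun k hk => ?_).trans_eq ?_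
  · exact hX.aemeasurable_dyadicIncrement ht (Finset.mem_range.1 hk)
  · have hk' := Finset.mem_range.1 hk
    rw [eLpNorm_enorm]
    convert hX.eLpNorm_sub_le ht ht (natCast_add_one_div_two_pow_mem_Icc hk')
      (natCast_div_two_pow_mem_Icc hk'.le) q using 4
    rw [sub_self, abs_zero, Real.sqrt_zero, zero_add, ← sub_div, add_sub_cancel_left,
      abs_of_pos (by positivity), mul_one_div]
  · rw [Finset.card_range, Nat.cast_pow, Nat.cast_ofNat, ← ENNReal.ofReal_ofNat,
      ← ENNReal.ofReal_pow (by norm_num),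
      ENNReal.ofReal_rpow_of_nonneg (by positivity) (by positivity),
      ← ENNReal.ofReal_mul (by positivity), ← mul_assoc, two_pow_rpow_mul_sqrt_div]
    ring_nf

lemma eLpNorm_dyadicGridSup_sub_le (hX : HasGaussianIncrements P X L) (hs : 0 ≤ s)
    (ht : 0 ≤ t) (N : ℕ) {q : ℝ≥0} (hq : q ≠ 0) :
    eLpNorm (fun ω => dyadicGridSup (fun x => X t x ω - X s x ω) N) q P
      ≤ ENNReal.ofReal
        (((2 : ℝ) ^ N + 1) ^ (1 / (q : ℝ)) * √(L * √|t - s|) * stdGaussianLpNorm q) := by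
  refine (eLpNorm_finset_sup_le _ (fun k hk => ?_) hq
    (b := ENNReal.ofReal (√(L * √|t - s|) * stdGaussianLpNorm q)) fun k hk => ?_).trans_eq ?_
  · exact (hX.aemeasurable_sub hs ht (natCast_div_two_pow_mem_Icc (Nat.lt_succ_iff.1
      (Finset.mem_range.1 hk))) (natCast_div_two_pow_mem_Icc (Nat.lt_succ_iff.1
      (Finset.mem_range.1 hk)))).enorm
  · have hk' := natCast_div_two_pow_mem_Icc (Nat.lt_succ_iff.1 (Finset.mem_range.1 hk))
    rw [eLpNorm_enorm]
    simpa using hX.eLpNorm_sub_le hs ht hk' hk' q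
  · rw [Finset.card_range, ← ENNReal.ofReal_natCast,
      ENNReal.ofReal_rpow_of_nonneg (by positivity) (by positivity),
      ← ENNReal.ofReal_mul (by positivity), ← mul_assoc]
    push_cast
    rfl

lemma tsum_eLpNorm_dyadicIncrementSup_le (hX : HasGaussianIncrements P X L) (hs : 0 ≤ s)
    (ht : 0 ≤ t) {q : ℝ≥0} (hq : 2 < q) (N : ℕ) :
    ∑' j, (eLpNorm (fun ω => dyadicIncrementSup (X t · ω) (N + 1 + j)) q P
        + eLpNorm (fun ω => dyadicIncrementSup (X s · ω) (N + 1 + j)) q P)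
      ≤ ENNReal.ofReal (2 / (1 - (2 : ℝ) ^ (1 / (q : ℝ) - 1 / 2)) * √L * stdGaussianLpNorm q
        * ((2 : ℝ) ^ (1 / (q : ℝ) - 1 / 2)) ^ N) := by
  set ρ : ℝ := (2 : ℝ) ^ (1 / (q : ℝ) - 1 / 2)
  set c := √L * stdGaussianLpNorm q
  have hρ0 : 0 ≤ ρ := by positivity
  have hρ1 : ρ < 1 := two_rpow_lt_one (by exact_mod_cast hq)
  have hq0 : q ≠ 0 := by positivity
  have hgeom : HasSum (fun j => 2 * c * ρ ^ (N + 1 + j)) (2 * c * ρ ^ (N + 1) / (1 - ρ)) := by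
    simp_rw [pow_add ρ (N + 1), ← mul_assoc, div_eq_mul_inv]
    exact (hasSum_geometric_of_lt_one hρ0 hρ1).mul_left _
  calc _ ≤ ∑' j, ENNReal.ofReal (2 * c * ρ ^ (N + 1 + j)) := ENNReal.tsum_le_tsum fun j =>
        (add_le_add (hX.eLpNorm_dyadicIncrementSup_le ht _ hq0)
          (hX.eLpNorm_dyadicIncrementSup_le hs _ hq0)).trans_eq
          (by rw [← ENNReal.ofReal_add (by positivity) (by positivity)]; congr 1; ring)
    _ = ENNReal.ofReal (2 * c * ρ ^ (N + 1) / (1 - ρ)) := by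
        rw [← ENNReal.ofReal_tsum_of_nonneg (fun j => by positivity) hgeom.summable,
          hgeom.tsum_eq]
    _ ≤ _ := by
        have h1ρ : 0 < 1 - ρ := by linarith
        rw [show 2 * c * ρ ^ (N + 1) / (1 - ρ)
          = 2 / (1 - ρ) * √L * stdGaussianLpNorm q * ρ ^ N * ρ by ring]
        exact ENNReal.ofReal_le_ofReal (mul_le_of_le_one_right (by positivity) hρ1.le)

lemma eLpNorm_iSup_sub_le_dyadic (hX : HasGaussianIncrements P X L)
    (hcont : ∀ᵐ ω ∂P, ContinuousOn (fun q : ℝ × ℝ => X q.1 q.2 ω) (Ici 0 ×ˢ Icc 0 1))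
    (hs : 0 ≤ s) (ht : 0 ≤ t) (N : ℕ) {q : ℝ≥0} (hq : 1 ≤ q) :
    eLpNorm (fun ω => ⨆ x : Icc (0 : ℝ) 1, ‖X t x ω - X s x ω‖ₑ) q P
      ≤ eLpNorm (fun ω => dyadicGridSup (fun x => X t x ω - X s x ω) N) q P
        + ∑' j, (eLpNorm (fun ω => dyadicIncrementSup (X t · ω) (N + 1 + j)) q P
          + eLpNorm (fun ω => dyadicIncrementSup (X s · ω) (N + 1 + j)) q P) := by
  have hq' : (1 : ℝ≥0∞) ≤ q := by exact_mod_cast hq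
  have hinc : ∀ n, AEMeasurable (fun ω => dyadicIncrementSup (X t · ω) n
      + dyadicIncrementSup (X s · ω) n) P := fun n =>
    (hX.aemeasurable_dyadicIncrementSup ht n).add (hX.aemeasurable_dyadicIncrementSup hs n)
  have hpath : ∀ᵐ ω ∂P, ⨆ x : Icc (0 : ℝ) 1, ‖X t x ω - X s x ω‖ₑ
      ≤ dyadicGridSup (fun x => X t x ω - X s x ω) N
        + ∑' j, (dyadicIncrementSup (X t · ω) (N + 1 + j)
          + dyadicIncrementSup (X s · ω) (N + 1 + j)) := by
    filter_upwards [hcont] with ω hω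
    refine iSup_le fun x => (enorm_le_dyadicGridSup_add_tsum (hω.sub_slices hs ht) x.2 N).trans
      (add_le_add le_rfl (ENNReal.tsum_le_tsum fun j => dyadicIncrementSup_sub_le _ _ _))
  calc _ ≤ eLpNorm (fun ω => dyadicGridSup (fun x => X t x ω - X s x ω) N
          + ∑' j, (dyadicIncrementSup (X t · ω) (N + 1 + j)
            + dyadicIncrementSup (X s · ω) (N + 1 + j))) q P :=
        eLpNorm_mono_enorm_ae (by simpa only [enorm_eq_self] using hpath)
    _ ≤ _ := eLpNorm_add_le (hX.aemeasurable_dyadicGridSup_sub hs ht N).aestronglyMeasurable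
        (AEMeasurable.tsum fun j => hinc _).aestronglyMeasurable hq'
    _ ≤ _ := by
        gcongr
        refine (eLpNorm_tsum_le (fun j => hinc _) hq).trans (ENNReal.tsum_le_tsum fun j => ?_)
        exact eLpNorm_add_le (hX.aemeasurable_dyadicIncrementSup ht _).aestronglyMeasurable
          (hX.aemeasurable_dyadicIncrementSup hs _).aestronglyMeasurable hq'

lemma eLpNorm_iSup_sub_le_of_le_one (hX : HasGaussianIncrements P X L)
    (hcont : ∀ᵐ ω ∂P, ContinuousOn (fun q : ℝ × ℝ => X q.1 q.2 ω) (Ici 0 ×ˢ Icc 0 1))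
    (hs : 0 ≤ s) (ht : 0 ≤ t) {q : ℝ≥0} (hq : 2 < q) (hh0 : 0 < |t - s|) (hh1 : |t - s| ≤ 1) :
    eLpNorm (fun ω => ⨆ x : Icc (0 : ℝ) 1, ‖X t x ω - X s x ω‖ₑ) q P
      ≤ ENNReal.ofReal ((4 ^ (1 / (q : ℝ)) + 2 / (1 - (2 : ℝ) ^ (1 / (q : ℝ) - 1 / 2)))
        * √L * stdGaussianLpNorm q * √|t - s| ^ (1 / 2 - 1 / (q : ℝ))) := by
  have hq0 : (0 : ℝ) < q := by positivity
  have h1ρ : 0 < 1 - (2 : ℝ) ^ (1 / (q : ℝ) - 1 / 2) := sub_pos.2 (two_rpow_lt_one hq)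
  -- a grid of mesh `2^-N ≈ √|t - s|` balances the grid term against the tail
  obtain ⟨N, hN1, hN2⟩ :=
    exists_one_le_two_pow_mul_le_two (Real.sqrt_pos.2 hh0) (Real.sqrt_le_one.2 hh1)
  refine (hX.eLpNorm_iSup_sub_le_dyadic hcont hs ht N
    (by exact_mod_cast hq.le.trans' one_le_two)).trans ?_
  grw [hX.eLpNorm_dyadicGridSup_sub_le hs ht N (by positivity),
    hX.tsum_eLpNorm_dyadicIncrementSup_le hs ht hq N,
    ← ENNReal.ofReal_add (by positivity) (by positivity)]
  refine ENNReal.ofReal_le_ofReal ((add_le_add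
    (mul_le_mul_of_nonneg_right
      (two_pow_add_one_rpow_mul_sqrt_le hq0 (Real.sqrt_pos.2 hh0) hN2) (by positivity))
    (mul_le_mul_of_nonneg_left (two_rpow_pow_le (by exact_mod_cast hq.le) hN1)
      (by positivity))).trans_eq (by ring))

lemma eLpNorm_iSup_sub_le_of_dirichlet (hX : HasGaussianIncrements P X L)
    (hcont : ∀ᵐ ω ∂P, ContinuousOn (fun q : ℝ × ℝ => X q.1 q.2 ω) (Ici 0 ×ˢ Icc 0 1))
    (hbdry : ∀ t : ℝ, 0 ≤ t → ∀ᵐ ω ∂P, X t 0 ω = 0 ∧ X t 1 ω = 0)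
    (hs : 0 ≤ s) (ht : 0 ≤ t) {q : ℝ≥0} (hq : 2 < q) :
    eLpNorm (fun ω => ⨆ x : Icc (0 : ℝ) 1, ‖X t x ω - X s x ω‖ₑ) q P
      ≤ ENNReal.ofReal
        (2 / (1 - (2 : ℝ) ^ (1 / (q : ℝ) - 1 / 2)) * √L * stdGaussianLpNorm q) := by
  have hgrid : eLpNorm (fun ω => dyadicGridSup (fun x => X t x ω - X s x ω) 0) q P = 0 := by
    refine (eLpNorm_congr_ae ?_).trans eLpNorm_zero'
    filter_upwards [hbdry t ht, hbdry s hs] with ω ⟨ht0, ht1⟩ ⟨hs0, hs1⟩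
    exact dyadicGridSup_zero_of_eq_zero (by simp [ht0, hs0]) (by simp [ht1, hs1])
  refine (hX.eLpNorm_iSup_sub_le_dyadic hcont hs ht 0
    (by exact_mod_cast hq.le.trans' one_le_two)).trans ?_
  simpa [hgrid] using hX.tsum_eLpNorm_dyadicIncrementSup_le hs ht hq 0

lemma exists_eLpNorm_iSup_sub_le (hX : HasGaussianIncrements P X L)
    (hcont : ∀ᵐ ω ∂P, ContinuousOn (fun q : ℝ × ℝ => X q.1 q.2 ω) (Ici 0 ×ˢ Icc 0 1))
    (hbdry : ∀ t : ℝ, 0 ≤ t → ∀ᵐ ω ∂P, X t 0 ω = 0 ∧ X t 1 ω = 0)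
    {q : ℝ≥0} (hq : 2 < q) {γ : ℝ} (hγ0 : 0 ≤ γ) (hγq : 2 * γ ≤ 1 / 2 - 1 / (q : ℝ)) :
    ∃ C > 0, ∀ s t : ℝ, 0 ≤ s → 0 ≤ t →
      eLpNorm (fun ω => ⨆ x : Icc (0 : ℝ) 1, ‖X t x ω - X s x ω‖ₑ) q P
        ≤ ENNReal.ofReal (C * |t - s| ^ γ) := by
  have h1ρ : 0 < 1 - (2 : ℝ) ^ (1 / (q : ℝ) - 1 / 2) := sub_pos.2 (two_rpow_lt_one hq)
  set B := (4 ^ (1 / (q : ℝ)) + 2 / (1 - (2 : ℝ) ^ (1 / (q : ℝ) - 1 / 2)))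
    * √L * stdGaussianLpNorm q
  have hB : 2 / (1 - (2 : ℝ) ^ (1 / (q : ℝ) - 1 / 2)) * √L * stdGaussianLpNorm q ≤ B := by
    simp only [B]; gcongr; exact le_add_of_nonneg_left (by positivity)
  refine ⟨B + 1, by positivity, fun s t hs ht => ?_⟩
  rcases (abs_nonneg (t - s)).eq_or_lt with h0 | h0
  · obtain rfl : t = s := sub_eq_zero.1 (abs_eq_zero.1 h0.symm)
    simp
  rcases le_or_gt |t - s| 1 with h1 | h1
  · refine (hX.eLpNorm_iSup_sub_le_of_le_one hcont hs ht hq h0 h1).trans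
      (ENNReal.ofReal_le_ofReal ?_)
    exact mul_le_mul (by linarith) (sqrt_rpow_le_rpow h0 h1 hγq) (by positivity) (by positivity)
  · refine (hX.eLpNorm_iSup_sub_le_of_dirichlet hcont hbdry hs ht hq).trans
      (ENNReal.ofReal_le_ofReal ?_)
    calc _ ≤ B := hB
      _ ≤ (B + 1) * 1 := by linarith
      _ ≤ (B + 1) * |t - s| ^ γ := by gcongr; exact Real.one_le_rpow h1.le hγ0

end HasGaussianIncrements

-- `q ≥ p` is needed for Lyapunov's inequality, `1/2 - 1/q ≥ 2γ` for the chaining exponent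
lemma exists_chaining_exponent {p γ : ℝ} (hp : 1 ≤ p) (hγ0 : 0 ≤ γ) (hγ : γ < 1 / 4) :
    ∃ q : ℝ≥0, p ≤ q ∧ 2 < q ∧ 2 * γ ≤ 1 / 2 - 1 / (q : ℝ) := by
  have h4γ : 0 < 1 - 4 * γ := by linarith
  have h2 : 2 ≤ 2 / (1 - 4 * γ) := by rw [le_div_iff₀ h4γ]; linarith
  set q : ℝ≥0 := (p + 2 / (1 - 4 * γ)).toNNReal
  have hq : (q : ℝ) = p + 2 / (1 - 4 * γ) := Real.coe_toNNReal _ (by linarith)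
  have hγq : 1 / (q : ℝ) ≤ 1 / (2 / (1 - 4 * γ)) :=
    one_div_le_one_div_of_le (by positivity) (by rw [hq]; linarith)
  rw [one_div_div] at hγq
  exact ⟨q, by rw [hq]; linarith, by exact_mod_cast (show (2 : ℝ) < q by rw [hq]; linarith),
    by linarith⟩

theorem gaussian_field_temporal_hoelder_moment_bound_general {Ω : Type*} [MeasurableSpace Ω]
    (P : Measure Ω) [IsProbabilityMeasure P]
    (X : ℝ → ℝ → Ω → ℝ) (L : ℝ)
    (hcont : ∀ᵐ ω ∂P,
      ContinuousOn (fun q : ℝ × ℝ => X q.1 q.2 ω) (Set.Ici 0 ×ˢ Set.Icc 0 1))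
    (hbdry : ∀ t : ℝ, 0 ≤ t → ∀ᵐ ω ∂P, X t 0 ω = 0 ∧ X t 1 ω = 0)
    (hgauss : ∀ s t : ℝ, 0 ≤ s → 0 ≤ t → ∀ x ∈ Set.Icc (0 : ℝ) 1, ∀ y ∈ Set.Icc (0 : ℝ) 1,
      ∃ v : NNReal, (v : ℝ) ≤ L * (Real.sqrt |t - s| + |x - y|) ∧
        Measure.map (fun ω => X t x ω - X s y ω) P = gaussianReal 0 v)
    (p : ℝ) (hp : 1 ≤ p) (γ : ℝ) (hγ : γ ∈ Set.Ioo (0 : ℝ) (1 / 4)) :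
    ∃ C > (0 : ℝ), ∀ s t : ℝ, 0 ≤ s → 0 ≤ t →
      (∫⁻ ω, (⨆ x : Set.Icc (0 : ℝ) 1, ENNReal.ofReal |X t x.1 ω - X s x.1 ω|) ^ p ∂P)
        ≤ ENNReal.ofReal (C * |t - s| ^ (γ * p)) := by
  obtain ⟨hγ0, hγ1⟩ := hγ
  have hX : HasGaussianIncrements P X L := hgauss
  obtain ⟨q, hpq, hq, hγq⟩ := exists_chaining_exponent hp hγ0.le hγ1
  obtain ⟨C, hC, hbound⟩ := hX.exists_eLpNorm_iSup_sub_le hcont hbdry hq hγ0.le hγq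
  refine ⟨C ^ p, by positivity, fun s t hs ht => ?_⟩
  simp_rw [← Real.enorm_eq_ofReal_abs]
  calc _ ≤ eLpNorm (fun ω => ⨆ x : Icc (0 : ℝ) 1, ‖X t x ω - X s x ω‖ₑ) q P ^ p :=
        lintegral_rpow_le_eLpNorm_rpow (hX.aemeasurable_iSup_sub hcont hs ht) (by linarith) hpq
    _ ≤ ENNReal.ofReal (C * |t - s| ^ γ) ^ p := by gcongr; exact hbound s t hs ht
    _ = ENNReal.ofReal (C ^ p * |t - s| ^ (γ * p)) := by
        rw [ENNReal.ofReal_rpow_of_nonneg (by positivity) (by linarith),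
          Real.mul_rpow hC.le (by positivity), ← Real.rpow_mul (abs_nonneg _)]

/-- Temporal Hölder moment bound for a continuous centered Gaussian field on `[0,∞)×[0,1]`
with Dirichlet boundary and increment variance bound
`Var(X(t,x) − X(s,y)) ≤ L(√|t−s| + |x−y|)`: for every `p ∈ [1,∞)` and `γ ∈ (0,1/4)` there is
`C > 0` with `E[(sup_{x∈[0,1]} |X(t,x) − X(s,x)|)^p] ≤ C |t−s|^{γp}` for all `s, t ≥ 0`. -/
theorem gaussian_field_temporal_hoelder_moment_bound {Ω : Type*} [MeasurableSpace Ω]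
    (P : Measure Ω) [IsProbabilityMeasure P]
    (X : ℝ → ℝ → Ω → ℝ) (L : ℝ) (hL : 0 < L)
    (hcont : ∀ᵐ ω ∂P,
      ContinuousOn (fun q : ℝ × ℝ => X q.1 q.2 ω) (Set.Ici 0 ×ˢ Set.Icc 0 1))
    (hbdry : ∀ t : ℝ, 0 ≤ t → ∀ᵐ ω ∂P, X t 0 ω = 0 ∧ X t 1 ω = 0)
    (hgauss : ∀ s t : ℝ, 0 ≤ s → 0 ≤ t → ∀ x ∈ Set.Icc (0 : ℝ) 1, ∀ y ∈ Set.Icc (0 : ℝ) 1,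
      ∃ v : NNReal, (v : ℝ) ≤ L * (Real.sqrt |t - s| + |x - y|) ∧
        Measure.map (fun ω => X t x ω - X s y ω) P = gaussianReal 0 v)
    (p : ℝ) (hp : 1 ≤ p) (γ : ℝ) (hγ : γ ∈ Set.Ioo (0 : ℝ) (1 / 4)) :
    ∃ C > (0 : ℝ), ∀ s t : ℝ, 0 ≤ s → 0 ≤ t →
      (∫⁻ ω, (⨆ x : Set.Icc (0 : ℝ) 1, ENNReal.ofReal |X t x.1 ω - X s x.1 ω|) ^ p ∂P)
        ≤ ENNReal.ofReal (C * |t - s| ^ (γ * p)) :=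
  gaussian_field_temporal_hoelder_moment_bound_general P X L hcont hbdry hgauss p hp γ hγ
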